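/- arXiv:1911.09382 — 5 statements merged into one kernel-verified Lean document; each statement's English description precedes it below -/
import Mathlib

section
/- Let L be a sublattice of a Boolean algebra E and ρ : L × L → E a lattice form satisfying absorption. If a, b, a', b' ∈ L satisfy b ≤ a, b' ≤ a', and a \ b = a' \ b' in E (where x \ y := x ∧ yᶜ), then ρ(a,b) = ρ(a',b'). -/
/-- Well-definedness of the map induced by a lattice form with absorption:
if `a \ b = a' \ b'` in the ambient Boolean algebra, then `ρ a b = ρ a' b'`. -/
theorem form_well_defined {E I : Type*} [BooleanAlgebra E] [SemilatticeInf I]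
    (L : Sublattice E) (ρ : L → L → I)
    (habs1 : ∀ a b : L, ρ (a ⊔ b) a = ρ b a)
    (habs2 : ∀ a b : L, ρ a (a ⊓ b) = ρ a b)
    (a b a' b' : L) (hba : b ≤ a) (hb'a' : b' ≤ a')
    (h : (a : E) \ (b : E) = (a' : E) \ (b' : E)) :
    ρ a b = ρ a' b' := by
  have hbaE : (b : E) ≤ a := hba
  have hb'a'E : (b' : E) ≤ a' := hb'a'
  -- a ⊓ b' ≤ b
  have hab' : (a : E) ⊓ b' ≤ b := by
    rw [← sdiff_eq_bot_iff]
    have : ((a : E) ⊓ b') \ b = ((a : E) \ b) ⊓ b' := by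
      rw [sdiff_eq, sdiff_eq]; ac_rfl
    rw [this, h, sdiff_eq, inf_assoc, compl_inf_eq_bot, inf_bot_eq]
  have ha'b : (a' : E) ⊓ b ≤ b' := by
    rw [← sdiff_eq_bot_iff]
    have : ((a' : E) ⊓ b) \ b' = ((a' : E) \ b') ⊓ b := by
      rw [sdiff_eq, sdiff_eq]; ac_rfl
    rw [this, ← h, sdiff_eq, inf_assoc, compl_inf_eq_bot, inf_bot_eq]
  -- a' ≤ a ⊔ b' and a ≤ a' ⊔ b
  have ha' : (a' : E) ≤ a ⊔ b' := by
    have := sdiff_sup_cancel hb'a'E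
    calc (a' : E) = (a' : E) \ b' ⊔ b' := this.symm
      _ = (a : E) \ b ⊔ b' := by rw [h]
      _ ≤ a ⊔ b' := sup_le_sup_right sdiff_le _
  have ha : (a : E) ≤ a' ⊔ b := by
    have := sdiff_sup_cancel hbaE
    calc (a : E) = (a : E) \ b ⊔ b := this.symm
      _ = (a' : E) \ b' ⊔ b := by rw [h]
      _ ≤ a' ⊔ b := sup_le_sup_right sdiff_le _
  -- key equalities in L
  have key1 : a ⊓ (b ⊔ b') = b := by
    apply Subtype.ext
    show (a : E) ⊓ (b ⊔ b') = b
    rw [inf_sup_left, inf_eq_right.mpr hbaE, sup_eq_left.mpr hab']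
  have key2 : a' ⊓ (b ⊔ b') = b' := by
    apply Subtype.ext
    show (a' : E) ⊓ ((b : E) ⊔ b') = b'
    rw [inf_sup_left, inf_eq_right.mpr hb'a'E, sup_comm, sup_eq_left.mpr ha'b]
  have key3 : (b ⊔ b') ⊔ a = (b ⊔ b') ⊔ a' := by
    apply Subtype.ext
    show ((b : E) ⊔ b') ⊔ a = ((b : E) ⊔ b') ⊔ a'
    apply le_antisymm
    · refine sup_le (le_sup_left) ?_
      exact ha.trans (sup_le (le_sup_right) (le_sup_left.trans le_sup_left))
    · refine sup_le (le_sup_left) ?_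
      exact ha'.trans (sup_le (le_sup_right) (le_sup_right.trans le_sup_left))
  calc ρ a b = ρ a (a ⊓ (b ⊔ b')) := by rw [key1]
    _ = ρ a (b ⊔ b') := habs2 a (b ⊔ b')
    _ = ρ ((b ⊔ b') ⊔ a) (b ⊔ b') := (habs1 (b ⊔ b') a).symm
    _ = ρ ((b ⊔ b') ⊔ a') (b ⊔ b') := by rw [key3]
    _ = ρ a' (b ⊔ b') := habs1 (b ⊔ b') a'
    _ = ρ a' (a' ⊓ (b ⊔ b')) := (habs2 a' (b ⊔ b')).symm
    _ = ρ a' b' := by rw [key2]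
end

section
/- Let L and K be bounded distributive lattices embedded in Boolean algebras, h : K → L a bounded lattice homomorphism, and suppose K, L carry monotone distributive lattice forms (Conley forms) written a - b. If a - b = a' - b' in the Conley form of K, then h(a) - h(b) = h(a') - h(b') in the Conley form of L. -/
/-- If `x ≤ y` then the Conley form value `C x y` is the trivial value `C ⊥ ⊤`. -/
lemma conley_form_bot {M I : Type*} [DistribLattice M] [BoundedOrder M]
    [SemilatticeInf I] (C : M → M → I)
    (habs1 : ∀ a b : M, C (a ⊔ b) a = C b a)
    (habs2 : ∀ a b : M, C a (a ⊓ b) = C a b)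
    {x y : M} (hxy : x ≤ y) : C x y = C ⊥ ⊤ := by
  have h1 : C x x = C x y := by
    have := habs2 x y
    rwa [inf_eq_left.mpr hxy] at this
  have h2 : C x x = C ⊥ x := by
    have := habs1 x ⊥
    rwa [sup_bot_eq] at this
  have h3 : C ⊥ (⊥ ⊓ x) = C ⊥ x := habs2 ⊥ x
  have h4 : C ⊥ (⊥ ⊓ ⊤) = C ⊥ ⊤ := habs2 ⊥ ⊤
  rw [bot_inf_eq] at h3 h4
  rw [← h1, h2, ← h3, h4]

/-- Key reconstruction lemma: from the two lattice inequalities,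
`C p q = C (p ⊓ p') (q ⊔ q')`. -/
lemma conley_form_reduce {M I : Type*} [DistribLattice M] [BoundedOrder M]
    [SemilatticeInf I] (C : M → M → I)
    (habs1 : ∀ a b : M, C (a ⊔ b) a = C b a)
    (habs2 : ∀ a b : M, C a (a ⊓ b) = C a b)
    {p q p' q' : M} (h1 : p ⊓ q' ≤ q) (h2 : p ≤ p' ⊔ q) :
    C p q = C (p ⊓ p') (q ⊔ q') := by
  -- Step A : C p q = C p (q ⊔ q')
  have hA : C p q = C p (q ⊔ q') := by
    have e1 : p ⊓ (q ⊔ q') = p ⊓ q := by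
      rw [inf_sup_left]
      exact sup_eq_left.mpr (le_inf inf_le_left h1)
    have e2 : C p (p ⊓ (q ⊔ q')) = C p (q ⊔ q') := habs2 p (q ⊔ q')
    have e3 : C p (p ⊓ q) = C p q := habs2 p q
    rw [e1, e3] at e2
    exact e2
  -- Step B : C p (q ⊔ q') = C (p ⊓ p') (q ⊔ q')
  have hB : C p (q ⊔ q') = C (p ⊓ p') (q ⊔ q') := by
    set Q := q ⊔ q' with hQ
    have e1 : C (Q ⊔ p) Q = C p Q := habs1 Q p
    have e2 : C (Q ⊔ (p ⊓ p')) Q = C (p ⊓ p') Q := habs1 Q (p ⊓ p')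
    have e3 : Q ⊔ (p ⊓ p') = Q ⊔ p := by
      rw [sup_inf_left]
      refine inf_eq_left.mpr (sup_le le_sup_left ?_)
      exact h2.trans (sup_le le_sup_right (le_sup_of_le_left le_sup_left))
    rw [e3, e1] at e2
    exact e2
  rw [hA, hB]

/-- A bounded lattice homomorphism maps equal values of a Conley form to equal
values of a Conley form. -/
theorem conley_form_map {K L I J : Type*}
    [DistribLattice K] [BoundedOrder K] [DistribLattice L] [BoundedOrder L]
    [SemilatticeInf I] [SemilatticeInf J]
    (CK : K → K → I) (CL : L → L → J)
    (habsK1 : ∀ a b : K, CK (a ⊔ b) a = CK b a)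
    (habsK2 : ∀ a b : K, CK a (a ⊓ b) = CK a b)
    (hdistK : ∀ a b c d : K, CK (a ⊓ c) (b ⊔ d) = CK a b ⊓ CK c d)
    (hmonoK : ∀ a b : K, CK a b = CK ⊥ ⊤ → a ≤ b)
    (habsL1 : ∀ a b : L, CL (a ⊔ b) a = CL b a)
    (habsL2 : ∀ a b : L, CL a (a ⊓ b) = CL a b)
    (hdistL : ∀ a b c d : L, CL (a ⊓ c) (b ⊔ d) = CL a b ⊓ CL c d)
    (hmonoL : ∀ a b : L, CL a b = CL ⊥ ⊤ → a ≤ b)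
    (h : BoundedLatticeHom K L)
    (a b a' b' : K) (heq : CK a b = CK a' b') :
    CL (h a) (h b) = CL (h a') (h b') := by
  have kbot : ∀ {x y : K}, x ≤ y → CK x y = CK ⊥ ⊤ :=
    fun hxy => conley_form_bot CK habsK1 habsK2 hxy
  -- the four lattice inequalities in K
  have i1 : a ⊓ b' ≤ b := by
    apply hmonoK
    have e1 : CK (a ⊓ b') (b ⊔ ⊥) = CK a b ⊓ CK b' ⊥ := hdistK a b b' ⊥
    have e2 : CK (a' ⊓ b') (b' ⊔ ⊥) = CK a' b' ⊓ CK b' ⊥ := hdistK a' b' b' ⊥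
    rw [sup_bot_eq] at e1 e2
    rw [e1, heq, ← e2]
    exact kbot inf_le_right
  have i2 : a' ⊓ b ≤ b' := by
    apply hmonoK
    have e1 : CK (a' ⊓ b) (b' ⊔ ⊥) = CK a' b' ⊓ CK b ⊥ := hdistK a' b' b ⊥
    have e2 : CK (a ⊓ b) (b ⊔ ⊥) = CK a b ⊓ CK b ⊥ := hdistK a b b ⊥
    rw [sup_bot_eq] at e1 e2
    rw [e1, ← heq, ← e2]
    exact kbot inf_le_right
  have i3 : a ≤ a' ⊔ b := by
    apply hmonoK
    have e1 : CK (a ⊓ a) (b ⊔ a') = CK a b ⊓ CK a a' := hdistK a b a a'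
    have e2 : CK (a' ⊓ a) (b' ⊔ a') = CK a' b' ⊓ CK a a' := hdistK a' b' a a'
    rw [inf_idem] at e1
    rw [sup_comm b a'] at e1
    rw [e1, heq, ← e2]
    exact kbot (le_trans inf_le_left le_sup_right)
  have i4 : a' ≤ a ⊔ b' := by
    apply hmonoK
    have e1 : CK (a' ⊓ a') (b' ⊔ a) = CK a' b' ⊓ CK a' a := hdistK a' b' a' a
    have e2 : CK (a ⊓ a') (b ⊔ a) = CK a b ⊓ CK a' a := hdistK a b a' a
    rw [inf_idem] at e1
    rw [sup_comm b' a] at e1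
    rw [e1, ← heq, ← e2]
    exact kbot (le_trans inf_le_left le_sup_right)
  -- transport to L
  have j1 : h a ⊓ h b' ≤ h b := by rw [← map_inf]; exact OrderHomClass.monotone h i1
  have j2 : h a' ⊓ h b ≤ h b' := by rw [← map_inf]; exact OrderHomClass.monotone h i2
  have j3 : h a ≤ h a' ⊔ h b := by
    calc h a ≤ h (a' ⊔ b) := OrderHomClass.monotone h i3
      _ = h a' ⊔ h b := map_sup h a' b
  have j4 : h a' ≤ h a ⊔ h b' := by
    calc h a' ≤ h (a ⊔ b') := OrderHomClass.monotone h i4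
      _ = h a ⊔ h b' := map_sup h a b'
  have r1 : CL (h a) (h b) = CL (h a ⊓ h a') (h b ⊔ h b') :=
    conley_form_reduce CL habsL1 habsL2 j1 j3
  have r2 : CL (h a') (h b') = CL (h a' ⊓ h a) (h b' ⊔ h b) :=
    conley_form_reduce CL habsL1 habsL2 j2 j4
  rw [r1, r2, inf_comm (h a') (h a), sup_comm (h b') (h b)]
end

section
/- Let F be a binary relation on a finite set X. If A is an attractor (F(A) = A) and R is a repeller (F⁻¹(R) = R), then the Morse set A ∩ R is invariant: A ∩ R ⊆ F(A ∩ R) and A ∩ R ⊆ F⁻¹(A ∩ R). -/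
/-- Image of a set under a binary relation. -/
def imageRel {X : Type*} (F : X → X → Prop) (U : Set X) : Set X :=
  {y | ∃ x ∈ U, F x y}

/-- Preimage of a set under a binary relation. -/
def preRel {X : Type*} (F : X → X → Prop) (U : Set X) : Set X :=
  {x | ∃ y ∈ U, F x y}

/-- Morse sets `A ∩ R` (attractor intersect repeller) are invariant. -/
theorem morse_set_invariant {X : Type*} [Finite X] (F : X → X → Prop)
    (A R : Set X) (hA : imageRel F A = A) (hR : preRel F R = R) :
    A ∩ R ⊆ imageRel F (A ∩ R) ∧ A ∩ R ⊆ preRel F (A ∩ R) := by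
  constructor
  · rintro x ⟨hxA, hxR⟩
    obtain ⟨a, haA, haF⟩ : x ∈ imageRel F A := by rwa [← hA] at hxA
    have haR : a ∈ R := by rw [← hR]; exact ⟨x, hxR, haF⟩
    exact ⟨a, ⟨haA, haR⟩, haF⟩
  · rintro x ⟨hxA, hxR⟩
    obtain ⟨y, hyR, hyF⟩ : x ∈ preRel F R := by rwa [← hR] at hxR
    have hyA : y ∈ A := by rw [← hA]; exact ⟨x, hxA, hyF⟩
    exact ⟨y, ⟨hyA, hyR⟩, hyF⟩
end

section
/- Let F be a binary relation on a finite set X, U a forward invariant set (F(U) ⊆ U) and V a backward invariant set (F⁻¹(V) ⊆ V). Then the maximal invariant set in U ∩ V equals ω(U) ∩ α(V), where ω(U) = ⋂_{k≥0} ⋃_{n≥k} Fⁿ(U) and α(V) = ⋂_{k≥0} ⋃_{n≥k} F⁻ⁿ(V). -/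
/-- Omega limit set of a set under a binary relation. -/
def omegaRel {X : Type*} (F : X → X → Prop) (U : Set X) : Set X :=
  ⋂ k : ℕ, ⋃ n ≥ k, (imageRel F)^[n] U

/-- Alpha limit set of a set under a binary relation. -/
def alphaRel {X : Type*} (F : X → X → Prop) (U : Set X) : Set X :=
  ⋂ k : ℕ, ⋃ n ≥ k, (preRel F)^[n] U

/-- The maximal invariant set inside a set `W`. -/
def invRel {X : Type*} (F : X → X → Prop) (W : Set X) : Set X :=
  ⋃₀ {S | S ⊆ W ∧ S ⊆ imageRel F S ∧ S ⊆ preRel F S}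

/-!
Since `F(U) ⊆ U`, the iterates `Fⁿ(U)` decrease, so `ω(U)` is their intersection. On a finite set
this decreasing sequence stabilises, hence `F(ω(U)) = ω(U)`; dually `F⁻¹(α(V)) = α(V)`.
An invariant `S ⊆ U ∩ V` satisfies `S ⊆ Fⁿ(S) ⊆ Fⁿ(U)` for all `n`, so `S ⊆ ω(U)`, and likewise
`S ⊆ α(V)`. Conversely `ω(U) ∩ α(V)` is invariant: every point of `ω(U)` has a predecessor in
`ω(U)`, which lies in `α(V)` again when the point does, because `F⁻¹(α(V)) ⊆ α(V)`; symmetrically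
for successors.
-/

section

variable {X : Type*} (F : X → X → Prop)

theorem imageRel_mono : Monotone (imageRel F) := by
  rintro A B hAB y ⟨x, hx, hxy⟩
  exact ⟨x, hAB hx, hxy⟩

variable {F} {U : Set X}

theorem antitone_iterate_imageRel (hU : imageRel F U ⊆ U) :
    Antitone fun n => (imageRel F)^[n] U :=
  antitone_nat_of_succ_le fun n => by
    rw [Function.iterate_succ_apply]
    exact (imageRel_mono F).iterate n hU

theorem omegaRel_eq_iInter_iterate (hU : imageRel F U ⊆ U) :
    omegaRel F U = ⋂ n : ℕ, (imageRel F)^[n] U :=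
  Set.iInter_congr fun k => le_antisymm
    (Set.iUnion₂_subset fun _ hn => antitone_iterate_imageRel hU hn)
    (Set.subset_iUnion₂ (s := fun n (_ : n ≥ k) => (imageRel F)^[n] U) k le_rfl)

theorem omegaRel_subset (hU : imageRel F U ⊆ U) : omegaRel F U ⊆ U := by
  rw [omegaRel_eq_iInter_iterate hU]
  exact Set.iInter_subset _ 0

theorem exists_iterate_imageRel_eq_omegaRel [Finite X] (hU : imageRel F U ⊆ U) :
    ∃ N, ∀ n ≥ N, (imageRel F)^[n] U = omegaRel F U := by
  obtain ⟨N, hN⟩ := WellFoundedLT.antitone_chain_condition (antitone_iterate_imageRel hU)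
  have hω : omegaRel F U = (imageRel F)^[N] U := by
    rw [omegaRel_eq_iInter_iterate hU]
    refine (Set.iInter_subset _ N).antisymm (Set.subset_iInter fun k => ?_)
    rcases le_total k N with hk | hk
    · exact antitone_iterate_imageRel hU hk
    · exact (hN k hk).le
  exact ⟨N, fun n hn => hω ▸ (hN n hn).symm⟩

theorem imageRel_omegaRel [Finite X] (hU : imageRel F U ⊆ U) :
    imageRel F (omegaRel F U) = omegaRel F U := by
  obtain ⟨N, hN⟩ := exists_iterate_imageRel_eq_omegaRel hU
  calc imageRel F (omegaRel F U) = (imageRel F)^[N + 1] U := by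
        rw [← hN N le_rfl, Function.iterate_succ_apply']
    _ = omegaRel F U := hN (N + 1) N.le_succ

theorem subset_omegaRel {S : Set X} (hSU : S ⊆ U) (hS : S ⊆ imageRel F S) :
    S ⊆ omegaRel F U := by
  have hiter : ∀ n, S ⊆ (imageRel F)^[n] U := by
    intro n
    induction n with
    | zero => exact hSU
    | succ n ih =>
      rw [Function.iterate_succ_apply']
      exact hS.trans (imageRel_mono F ih)
  exact Set.subset_iInter fun k => (hiter k).trans
    (Set.subset_iUnion₂ (s := fun n (_ : n ≥ k) => (imageRel F)^[n] U) k le_rfl)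

theorem inter_subset_imageRel_inter {A B : Set X} (hA : A ⊆ imageRel F A)
    (hB : preRel F B ⊆ B) : A ∩ B ⊆ imageRel F (A ∩ B) := by
  rintro z ⟨hzA, hzB⟩
  obtain ⟨x, hxA, hxz⟩ := hA hzA
  exact ⟨x, ⟨hxA, hB ⟨z, hzB, hxz⟩⟩, hxz⟩

theorem subset_invRel {S W : Set X} (hSW : S ⊆ W) (hS : S ⊆ imageRel F S)
    (hS' : S ⊆ preRel F S) : S ⊆ invRel F W :=
  Set.subset_sUnion_of_mem ⟨hSW, hS, hS'⟩

end

/-- For `U` forward invariant and `V` backward invariant, the maximal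
invariant set in `U ∩ V` is `ω(U) ∩ α(V)`. -/
theorem inv_inter_eq_omega_inter_alpha {X : Type*} [Finite X]
    (F : X → X → Prop) (U V : Set X)
    (hU : imageRel F U ⊆ U) (hV : preRel F V ⊆ V) :
    invRel F (U ∩ V) = omegaRel F U ∩ alphaRel F V := by
  -- `preRel F = imageRel (flip F)` and `alphaRel F = omegaRel (flip F)` hold definitionally.
  have hω : imageRel F (omegaRel F U) = omegaRel F U := imageRel_omegaRel hU
  have hα : preRel F (alphaRel F V) = alphaRel F V := imageRel_omegaRel (F := flip F) hV
  apply le_antisymm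
  · refine Set.sUnion_subset fun S ⟨hSW, hS, hS'⟩ => Set.subset_inter ?_ ?_
    · exact subset_omegaRel (hSW.trans Set.inter_subset_left) hS
    · exact subset_omegaRel (F := flip F) (hSW.trans Set.inter_subset_right) hS'
  · refine subset_invRel (Set.inter_subset_inter (omegaRel_subset hU)
      (omegaRel_subset (F := flip F) hV)) (inter_subset_imageRel_inter hω.ge hα.le) ?_
    rw [Set.inter_comm]
    exact inter_subset_imageRel_inter (F := flip F) hα.ge hω.le
end

section
/- Let φ be a dynamical system on a compact metric space X. For compact invariant sets S, S' with meet S ∧ S' := ω(S ∩ S'), the stable sets satisfy W^s(S ∧ S') = W^s(S) ∩ W^s(S'), where W^s(S) = {x ∈ X | ω(x) ⊆ S}. -/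
/-- Omega limit set of a subset under a semiflow. -/
def omegaSet {X : Type*} [TopologicalSpace X] (φ : ℝ → X → X) (A : Set X) :
    Set X :=
  ⋂ t ≥ (0 : ℝ), closure (⋃ s ≥ t, φ s '' A)

/-- Stable set of a set `S`: points whose omega limit set lies in `S`. -/
def stableSet {X : Type*} [TopologicalSpace X] (φ : ℝ → X → X) (S : Set X) :
    Set X :=
  {x | omegaSet φ {x} ⊆ S}

/-!
A point of `ω(S ∩ S')` is a limit of forward images of points of the closed forward-invariant
sets `S` and `S'`, so it lies in both. Conversely, in a compact space the ω-limit set of a point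
is backward invariant, `ω(x) ⊆ φ t '' ω(x)`, and every backward-invariant subset of a set `A`
lies in `ω(A)`; hence `ω(x) ⊆ S ∩ S'` forces `ω(x) ⊆ ω(S ∩ S')`.
-/

open Set Filter Topology

section Semiflow

variable {X : Type*} [TopologicalSpace X] {φ : ℝ → X → X}

theorem omegaSet_eq_omegaLimit (A : Set X) : omegaSet φ A = omegaLimit atTop φ A := by
  refine Subset.antisymm (fun y hy => mem_iInter₂.2 fun u hu => ?_)
    (iInter₂_mono' fun t _ => ⟨Ici t, Ici_mem_atTop t, ?_⟩)
  · obtain ⟨t, ht, htu⟩ := (atTop_basis' 0).mem_iff.1 hu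
    refine closure_mono ?_ (mem_iInter₂.1 hy t ht)
    exact iUnion₂_subset fun s hs => image_subset_image2_right (htu hs)
  · simp only [image2_eq_iUnion, image_eq_iUnion, mem_Ici, subset_refl]

theorem mem_omegaSet_singleton_iff_mapClusterPt {x y : X} :
    y ∈ omegaSet φ {x} ↔ MapClusterPt y atTop fun t => φ t x := by
  rw [omegaSet_eq_omegaLimit, mem_omegaLimit_singleton_iff_mapClusterPt]

theorem omegaSet_subset_of_mapsTo {A T : Set X} (hT : IsClosed T)
    (hmaps : ∀ t ≥ (0 : ℝ), MapsTo (φ t) T T) (hA : A ⊆ T) : omegaSet φ A ⊆ T :=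
  (iInter₂_subset 0 le_rfl).trans <| closure_minimal
    (iUnion₂_subset fun t ht => (hmaps t ht).image_subset.trans' (image_mono hA)) hT

theorem subset_omegaSet_of_subset_image {A B : Set X} (hB : ∀ t ≥ (0 : ℝ), B ⊆ φ t '' B)
    (hBA : B ⊆ A) : B ⊆ omegaSet φ A := fun _ hy =>
  mem_iInter₂.2 fun t ht => subset_closure <|
    mem_iUnion₂.2 ⟨t, le_rfl, image_mono hBA (hB t ht hy)⟩

theorem omegaSet_singleton_subset_image [CompactSpace X] [T2Space X]
    (hcont : ∀ t ≥ (0 : ℝ), Continuous (φ t))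
    (hadd : ∀ s t : ℝ, 0 ≤ s → 0 ≤ t → ∀ x, φ t (φ s x) = φ (t + s) x)
    (x : X) {t : ℝ} (ht : 0 ≤ t) : omegaSet φ {x} ⊆ φ t '' omegaSet φ {x} := by
  intro y hy
  obtain ⟨U, hU, hUy⟩ :=
    mapClusterPt_iff_ultrafilter.1 (mem_omegaSet_singleton_iff_mapClusterPt.1 hy)
  -- the preimage `z` of `y` is a limit of the orbit delayed by `t`, along the same ultrafilter
  obtain ⟨z, -, hUz⟩ :=
    isCompact_univ.ultrafilter_le_nhds (U.map fun s => φ (s - t) x) (by simp)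
  refine ⟨z, mem_omegaSet_singleton_iff_mapClusterPt.2 ?_, ?_⟩
  · exact mapClusterPt_iff_ultrafilter.2 ⟨U.map (· - t),
      (tendsto_atTop_add_const_right _ (-t) tendsto_id).mono_left hU, hUz⟩
  · have hshift : (fun s => φ t (φ (s - t) x)) =ᶠ[U] fun s => φ s x := by
      filter_upwards [hU (eventually_ge_atTop t)] with s hs
      rw [hadd _ _ (by linarith) ht, add_sub_cancel]
    exact tendsto_nhds_unique (((hcont t ht).tendsto z).comp hUz) (hUy.congr' hshift.symm)

end Semiflow

theorem stableSet_inter_general {X : Type*} [MetricSpace X] [CompactSpace X]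
    (φ : ℝ → X → X)
    (hcont : Continuous fun p : {t : ℝ // 0 ≤ t} × X => φ p.1.1 p.2)
    (hadd : ∀ s t : ℝ, 0 ≤ s → 0 ≤ t → ∀ x, φ t (φ s x) = φ (t + s) x)
    (S S' : Set X) (hS : IsCompact S) (hS' : IsCompact S')
    (hSinv : ∀ t ≥ (0 : ℝ), φ t '' S = S)
    (hS'inv : ∀ t ≥ (0 : ℝ), φ t '' S' = S') :
    stableSet φ (omegaSet φ (S ∩ S')) = stableSet φ S ∩ stableSet φ S' := by
  have hφ : ∀ t ≥ (0 : ℝ), Continuous (φ t) := fun t ht =>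
    hcont.comp (continuous_const (y := (⟨t, ht⟩ : {t : ℝ // 0 ≤ t})).prodMk continuous_id)
  have hmeet_S : omegaSet φ (S ∩ S') ⊆ S := omegaSet_subset_of_mapsTo hS.isClosed
    (fun t ht => mapsTo_iff_image_subset.2 (hSinv t ht).subset) inter_subset_left
  have hmeet_S' : omegaSet φ (S ∩ S') ⊆ S' := omegaSet_subset_of_mapsTo hS'.isClosed
    (fun t ht => mapsTo_iff_image_subset.2 (hS'inv t ht).subset) inter_subset_right
  ext x
  refine ⟨fun hx => ⟨hx.trans hmeet_S, hx.trans hmeet_S'⟩, fun ⟨hxS, hxS'⟩ => ?_⟩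
  exact subset_omegaSet_of_subset_image (fun t ht => omegaSet_singleton_subset_image hφ hadd x ht)
    (subset_inter hxS hxS')

/-- The stable set of the meet `S ∧ S' = ω(S ∩ S')` of two compact invariant
sets is the intersection of the stable sets. -/
theorem stableSet_inter {X : Type*} [MetricSpace X] [CompactSpace X]
    (φ : ℝ → X → X)
    (hcont : Continuous fun p : {t : ℝ // 0 ≤ t} × X => φ p.1.1 p.2)
    (h0 : ∀ x, φ 0 x = x)
    (hadd : ∀ s t : ℝ, 0 ≤ s → 0 ≤ t → ∀ x, φ t (φ s x) = φ (t + s) x)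
    (S S' : Set X) (hS : IsCompact S) (hS' : IsCompact S')
    (hSinv : ∀ t ≥ (0 : ℝ), φ t '' S = S)
    (hS'inv : ∀ t ≥ (0 : ℝ), φ t '' S' = S') :
    stableSet φ (omegaSet φ (S ∩ S')) = stableSet φ S ∩ stableSet φ S' :=
  stableSet_inter_general φ hcont hadd S S' hS hS' hSinv hS'inv
end
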